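/- Fix d, L ∈ ℕ, 0 < λ_1 < … < λ_L, a finite set of shifts M ⊆ [−d,d]², and a window w = (w_1, …, w_L) with w_ℓ ∈ ℂ^{[d]²}. With a^ℓ_{m,k} ∈ ℂ^{[d]²} given by (a^ℓ_{m,k})_n = conj((w_ℓ)_{n−m}) 𝟙_Q((n−m)/d) e^{2πi (λ_1/λ_ℓ) k·n/d} and Q^w_{m,k} the block-diagonal matrix with ℓ-th diagonal block λ_ℓ^{−2} a^ℓ_{m,k}(a^ℓ_{m,k})*, the spectral norm satisfies ‖Σ_{m∈M} Σ_{k∈[d]²} Q^w_{m,k}‖ ≤ max_{ℓ=1,…,L} { λ_ℓ^{−2} ‖F_ℓ‖² max_{n∈[d]²} Σ_{m∈M} |(w_ℓ)_{n−m}|² 𝟙_Q((n−m)/d) }, where F_ℓ ∈ ℂ^{[d]²×[d]²} is the matrix with entries (F_ℓ)_{k,n} = e^{−2πi (λ_1/λ_ℓ) k·n/d}. -/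

import Mathlib

open Matrix

/-- Spectral (operator 2-) norm of a square complex matrix. -/
noncomputable def specNorm {n : Type*} [Fintype n] [DecidableEq n] (A : Matrix n n ℂ) : ℝ :=
  ‖Matrix.toEuclideanCLM (𝕜 := ℂ) A‖

/-- Extension of a vector `v ∈ ℂ^{[d]²}` to `ℤ²` by zero: this realizes
`v_p · 𝟙_Q(p/d)`, where `𝟙_Q(p/d) = 1` iff `p ∈ [d]²`. -/
noncomputable def extz (d : ℕ) (v : Fin d × Fin d → ℂ) (p : ℤ × ℤ) : ℂ :=
  if h : 0 ≤ p.1 ∧ p.1 < (d : ℤ) ∧ 0 ≤ p.2 ∧ p.2 < (d : ℤ) then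
    v (⟨p.1.toNat, by omega⟩, ⟨p.2.toNat, by omega⟩)
  else 0

/-- The vector `a^ℓ_{m,k} ∈ ℂ^{[d]²}` with entries
`(a^ℓ_{m,k})_n = conj((w_ℓ)_{n−m}) 𝟙_Q((n−m)/d) e^{2πi (λ₁/λ_ℓ) k·n/d}`. -/
noncomputable def avec (d L : ℕ) (lam : Fin L → ℝ) (lam1 : ℝ)
    (w : Fin L → Fin d × Fin d → ℂ) (ℓ : Fin L) (m : ℤ × ℤ) (k : Fin d × Fin d) :
    Fin d × Fin d → ℂ := fun n =>
  (starRingEnd ℂ) (extz d (w ℓ) ((n.1 : ℤ) - m.1, (n.2 : ℤ) - m.2)) *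
    Complex.exp (2 * Real.pi * Complex.I * (lam1 / lam ℓ : ℝ) *
      (((k.1 : ℕ) * (n.1 : ℕ) + (k.2 : ℕ) * (n.2 : ℕ) : ℕ)) / (d : ℕ))

/-- The block-diagonal measurement matrix `Q^w_{m,k} ∈ ℂ^{dL×dL}` with `ℓ`-th diagonal
block `λ_ℓ^{−2} a^ℓ_{m,k} (a^ℓ_{m,k})^*`. -/
noncomputable def Qw (d L : ℕ) (lam : Fin L → ℝ) (lam1 : ℝ)
    (w : Fin L → Fin d × Fin d → ℂ) (m : ℤ × ℤ) (k : Fin d × Fin d) :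
    Matrix (Fin L × (Fin d × Fin d)) (Fin L × (Fin d × Fin d)) ℂ :=
  Matrix.of fun p q =>
    if p.1 = q.1 then
      ((lam p.1 : ℂ) ^ 2)⁻¹ * avec d L lam lam1 w p.1 m k p.2 *
        (starRingEnd ℂ) (avec d L lam lam1 w p.1 m k q.2)
    else 0

/-- The partial Fourier matrix `F_ℓ` with entries `(F_ℓ)_{k,n} = e^{−2πi (λ₁/λ_ℓ) k·n/d}`. -/
noncomputable def Fmat (d L : ℕ) (lam : Fin L → ℝ) (lam1 : ℝ) (ℓ : Fin L) :
    Matrix (Fin d × Fin d) (Fin d × Fin d) ℂ :=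
  Matrix.of fun k n =>
    Complex.exp (-(2 * Real.pi * Complex.I) * (lam1 / lam ℓ : ℝ) *
      (((k.1 : ℕ) * (n.1 : ℕ) + (k.2 : ℕ) * (n.2 : ℕ) : ℕ)) / (d : ℕ))

section Aux

set_option linter.unusedSectionVars false

lemma clm_norm_le_of_quadform {ι : Type*} [Fintype ι]
    (T : EuclideanSpace ℂ ι →L[ℂ] EuclideanSpace ℂ ι)
    (hsa : _root_.IsSelfAdjoint T) (C : ℝ) (hC : 0 ≤ C)
    (hpos : ∀ x, 0 ≤ (inner ℂ (T x) x : ℂ).re)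
    (h : ∀ x, (inner ℂ (T x) x : ℂ).re ≤ C * ‖x‖ ^ 2) : ‖T‖ ≤ C := by
  have hsmul : _root_.IsSelfAdjoint
      ((C : ℂ) • (1 : EuclideanSpace ℂ ι →L[ℂ] EuclideanSpace ℂ ι)) := by
    show star _ = _
    rw [star_smul, star_one, Complex.star_def, Complex.conj_ofReal]
  have hle : T ≤ (C : ℂ) • 1 := by
    rw [ContinuousLinearMap.le_def]
    refine ⟨ContinuousLinearMap.isSelfAdjoint_iff_isSymmetric.mp (hsmul.sub hsa), fun x => ?_⟩
    rw [ContinuousLinearMap.reApplyInnerSelf]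
    simp only [ContinuousLinearMap.sub_apply, ContinuousLinearMap.smul_apply,
      ContinuousLinearMap.one_apply, inner_sub_left, map_sub, inner_smul_left,
      Complex.star_def, Complex.conj_ofReal]
    have h2 : (((C : ℂ)) * inner ℂ x x).re = C * ‖x‖ ^ 2 := by
      rw [inner_self_eq_norm_sq_to_K]
      simp [← Complex.ofReal_pow, ← Complex.ofReal_mul]
    have := h x
    simp only [RCLike.re_to_complex, h2] at *
    linarith
  have hTpos : T.IsPositive := ⟨ContinuousLinearMap.isSelfAdjoint_iff_isSymmetric.mp hsa, fun x => hpos x⟩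
  calc ‖T‖ ≤ ‖((C : ℂ) • 1 : EuclideanSpace ℂ ι →L[ℂ] EuclideanSpace ℂ ι)‖ :=
        CStarAlgebra.norm_le_norm_of_nonneg_of_le
          ((ContinuousLinearMap.nonneg_iff_isPositive T).mpr hTpos) hle
    _ ≤ ‖(C : ℂ)‖ * ‖(1 : EuclideanSpace ℂ ι →L[ℂ] EuclideanSpace ℂ ι)‖ :=
        ContinuousLinearMap.opNorm_smul_le _ _
    _ ≤ C * 1 := by
        gcongr
        · simp [abs_of_nonneg hC]
        · exact ContinuousLinearMap.norm_id_le
    _ = C := mul_one C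

lemma specNorm_le_of_quadform {ι : Type*} [Fintype ι] [DecidableEq ι]
    (A : Matrix ι ι ℂ) (hA : Aᴴ = A) (C : ℝ) (hC : 0 ≤ C)
    (hpos : ∀ x : EuclideanSpace ℂ ι, 0 ≤ (inner ℂ (Matrix.toEuclideanCLM (𝕜 := ℂ) A x) x : ℂ).re)
    (h : ∀ x : EuclideanSpace ℂ ι,
      (inner ℂ (Matrix.toEuclideanCLM (𝕜 := ℂ) A x) x : ℂ).re ≤ C * ‖x‖ ^ 2) :
    specNorm A ≤ C := by
  refine clm_norm_le_of_quadform _ ?_ C hC hpos h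
  show star _ = _
  rw [← map_star]
  exact congrArg _ hA

variable (d L : ℕ) (lam : Fin L → ℝ) (lam1 : ℝ) (w : Fin L → Fin d × Fin d → ℂ)

lemma qf_Qw (m : ℤ × ℤ) (k : Fin d × Fin d) (x : Fin L × (Fin d × Fin d) → ℂ) :
    ∑ p, (starRingEnd ℂ) ((Qw d L lam lam1 w m k *ᵥ x) p) * x p =
      ∑ ℓ, ((lam ℓ : ℂ) ^ 2)⁻¹ *
        ((starRingEnd ℂ) (∑ n, (starRingEnd ℂ) (avec d L lam lam1 w ℓ m k n) * x (ℓ, n)) *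
          (∑ n, (starRingEnd ℂ) (avec d L lam lam1 w ℓ m k n) * x (ℓ, n))) := by
  have hmv : ∀ p : Fin L × (Fin d × Fin d), (Qw d L lam lam1 w m k *ᵥ x) p =
      ((lam p.1 : ℂ) ^ 2)⁻¹ * avec d L lam lam1 w p.1 m k p.2 *
        ∑ n, (starRingEnd ℂ) (avec d L lam lam1 w p.1 m k n) * x (p.1, n) := by
    intro p
    simp only [Matrix.mulVec, dotProduct, Qw, Matrix.of_apply, Fintype.sum_prod_type, ite_mul,
      zero_mul, Finset.sum_ite_irrel, Finset.sum_const_zero]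
    rw [Finset.sum_ite_eq Finset.univ p.1]
    simp only [Finset.mem_univ, if_true, Finset.mul_sum, Fintype.sum_prod_type]
    refine Finset.sum_congr rfl fun i _ => Finset.sum_congr rfl fun j _ => by ring
  simp only [hmv]
  rw [Fintype.sum_prod_type]
  refine Finset.sum_congr rfl fun ℓ _ => ?_
  simp only [_root_.map_mul, map_inv₀, map_pow, Complex.conj_ofReal]
  rw [Finset.sum_congr rfl (fun i (_ : i ∈ Finset.univ) =>
    show ((lam ℓ : ℂ) ^ 2)⁻¹ * (starRingEnd ℂ) (avec d L lam lam1 w ℓ m k i) *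
        (starRingEnd ℂ) (∑ n, (starRingEnd ℂ) (avec d L lam lam1 w ℓ m k n) * x (ℓ, n)) * x (ℓ, i)
      = ((lam ℓ : ℂ) ^ 2)⁻¹ *
        ((starRingEnd ℂ) (∑ n, (starRingEnd ℂ) (avec d L lam lam1 w ℓ m k n) * x (ℓ, n)) *
          ((starRingEnd ℂ) (avec d L lam lam1 w ℓ m k i) * x (ℓ, i))) by ring)]
  simp only [← Finset.mul_sum]

lemma conj_avec (ℓ : Fin L) (m : ℤ × ℤ) (k n : Fin d × Fin d) :
    (starRingEnd ℂ) (avec d L lam lam1 w ℓ m k n) =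
      Fmat d L lam lam1 ℓ k n * extz d (w ℓ) ((n.1 : ℤ) - m.1, (n.2 : ℤ) - m.2) := by
  simp only [avec, Fmat, Matrix.of_apply, _root_.map_mul, Complex.conj_conj]
  rw [← Complex.exp_conj]
  simp only [map_div₀, _root_.map_mul, Complex.conj_I, Complex.conj_ofReal, map_natCast,
    map_ofNat]
  rw [mul_comm]
  congr 2
  ring

lemma c_eq (ℓ : Fin L) (m : ℤ × ℤ) (k : Fin d × Fin d) (x : Fin L × (Fin d × Fin d) → ℂ) :
    ∑ n, (starRingEnd ℂ) (avec d L lam lam1 w ℓ m k n) * x (ℓ, n) =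
      (Fmat d L lam lam1 ℓ *ᵥ
        fun n : Fin d × Fin d => extz d (w ℓ) ((n.1 : ℤ) - m.1, (n.2 : ℤ) - m.2) * x (ℓ, n)) k := by
  simp only [Matrix.mulVec, dotProduct, conj_avec, mul_assoc]

lemma sum_sq_mulVec_le {ι : Type*} [Fintype ι] [DecidableEq ι] (A : Matrix ι ι ℂ) (y : ι → ℂ) :
    ∑ k, ‖(A *ᵥ y) k‖ ^ 2 ≤ specNorm A ^ 2 * ∑ n, ‖y n‖ ^ 2 := by
  set Y : EuclideanSpace ℂ ι := (WithLp.equiv 2 (ι → ℂ)).symm y with hY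
  have happ : ∀ k, (A *ᵥ y) k = (Matrix.toEuclideanCLM (𝕜 := ℂ) A Y) k := fun k => rfl
  have h1 : ∑ k, ‖(A *ᵥ y) k‖ ^ 2 = ‖Matrix.toEuclideanCLM (𝕜 := ℂ) A Y‖ ^ 2 := by
    simp_rw [happ]
    rw [EuclideanSpace.norm_eq, Real.sq_sqrt (by positivity)]
  have h2 : ∑ n, ‖y n‖ ^ 2 = ‖Y‖ ^ 2 := by
    rw [EuclideanSpace.norm_eq, Real.sq_sqrt (by positivity)]
    rfl
  rw [h1, h2, ← mul_pow]
  exact pow_le_pow_left₀ (norm_nonneg _) ((Matrix.toEuclideanCLM (𝕜 := ℂ) A).le_opNorm Y) 2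

lemma Qw_herm (m : ℤ × ℤ) (k : Fin d × Fin d) :
    (Qw d L lam lam1 w m k)ᴴ = Qw d L lam lam1 w m k := by
  ext p q
  simp only [Matrix.conjTranspose_apply, Qw, Matrix.of_apply]
  by_cases h : p.1 = q.1
  · rw [if_pos h, if_pos h.symm, h]
    simp only [star_mul', _root_.map_mul, map_inv₀, map_pow, Complex.conj_ofReal,
      Complex.conj_conj, RingHom.coe_coe, Complex.star_def]
    ring
  · rw [if_neg h, if_neg (fun hh => h hh.symm), star_zero]

end Aux

/-- The spectral–norm bound behind the admissible step size for
non-blind polychromatic ptychography: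
`‖Σ_{m∈M} Σ_{k∈[d]²} Q^w_{m,k}‖ ≤ max_ℓ { λ_ℓ^{−2} ‖F_ℓ‖² max_{n∈[d]²} Σ_{m∈M} |(w_ℓ)_{n−m}|² 𝟙_Q((n−m)/d) }`. -/
theorem stmt11 (d L : ℕ) (hd : 0 < d) (hL : 0 < L)
    (lam : Fin L → ℝ) (hlam : ∀ ℓ, 0 < lam ℓ) (hmono : StrictMono lam)
    (M : Finset (ℤ × ℤ))
    (hM : ∀ m ∈ M, -(d : ℤ) ≤ m.1 ∧ m.1 ≤ (d : ℤ) ∧ -(d : ℤ) ≤ m.2 ∧ m.2 ≤ (d : ℤ))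
    (w : Fin L → Fin d × Fin d → ℂ) :
    specNorm (∑ m ∈ M, ∑ k : Fin d × Fin d, Qw d L lam (lam ⟨0, hL⟩) w m k)
      ≤ Finset.univ.sup' ⟨⟨0, hL⟩, Finset.mem_univ _⟩
          (fun ℓ : Fin L =>
            ((lam ℓ) ^ 2)⁻¹ * specNorm (Fmat d L lam (lam ⟨0, hL⟩) ℓ) ^ 2 *
              Finset.univ.sup' ⟨(⟨0, hd⟩, ⟨0, hd⟩), Finset.mem_univ _⟩
                (fun n : Fin d × Fin d =>
                  ∑ m ∈ M, ‖extz d (w ℓ) ((n.1 : ℤ) - m.1, (n.2 : ℤ) - m.2)‖ ^ 2)) := by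
  set lam1 := lam ⟨0, hL⟩ with hlam1
  set S := ∑ m ∈ M, ∑ k : Fin d × Fin d, Qw d L lam lam1 w m k with hS
  set W : Fin L → ℝ := fun ℓ =>
    Finset.univ.sup' ⟨(⟨0, hd⟩, ⟨0, hd⟩), Finset.mem_univ _⟩
      (fun n : Fin d × Fin d =>
        ∑ m ∈ M, ‖extz d (w ℓ) ((n.1 : ℤ) - m.1, (n.2 : ℤ) - m.2)‖ ^ 2) with hWdef
  set B : Fin L → ℝ := fun ℓ =>
    ((lam ℓ) ^ 2)⁻¹ * specNorm (Fmat d L lam lam1 ℓ) ^ 2 * W ℓ with hBdef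
  set C : ℝ := Finset.univ.sup' ⟨⟨0, hL⟩, Finset.mem_univ _⟩ B with hCdef
  have hW0 : ∀ ℓ, 0 ≤ W ℓ := by
    intro ℓ
    refine le_trans ?_ (Finset.le_sup' _ (Finset.mem_univ (⟨0, hd⟩, ⟨0, hd⟩)))
    positivity
  have hB0 : ∀ ℓ, 0 ≤ B ℓ := by
    intro ℓ
    have := hW0 ℓ
    positivity
  have hBC : ∀ ℓ, B ℓ ≤ C := fun ℓ => Finset.le_sup' B (Finset.mem_univ ℓ)
  have hWle : ∀ (ℓ : Fin L) (n : Fin d × Fin d),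
      ∑ m ∈ M, ‖extz d (w ℓ) ((n.1 : ℤ) - m.1, (n.2 : ℤ) - m.2)‖ ^ 2 ≤ W ℓ := by
    intro ℓ n
    simp only [hWdef]
    exact Finset.le_sup'
      (fun n : Fin d × Fin d => ∑ m ∈ M, ‖extz d (w ℓ) ((n.1 : ℤ) - m.1, (n.2 : ℤ) - m.2)‖ ^ 2)
      (Finset.mem_univ n)
  have hC0 : 0 ≤ C := le_trans (hB0 ⟨0, hL⟩) (hBC ⟨0, hL⟩)
  -- Hermitian
  have hSH : Sᴴ = S := by
    rw [hS]
    rw [Matrix.conjTranspose_sum]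
    refine Finset.sum_congr rfl fun m _ => ?_
    rw [Matrix.conjTranspose_sum]
    exact Finset.sum_congr rfl fun k _ => Qw_herm d L lam lam1 w m k
  -- quadratic form identity
  have key : ∀ x : EuclideanSpace ℂ (Fin L × (Fin d × Fin d)),
      (inner ℂ (Matrix.toEuclideanCLM (𝕜 := ℂ) S x) x : ℂ).re
        = ∑ m ∈ M, ∑ k : Fin d × Fin d, ∑ ℓ, ((lam ℓ) ^ 2)⁻¹ *
            ‖∑ n, (starRingEnd ℂ) (avec d L lam lam1 w ℓ m k n) * x (ℓ, n)‖ ^ 2 := by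
    intro x
    have h0 : (inner ℂ (Matrix.toEuclideanCLM (𝕜 := ℂ) S x) x : ℂ)
        = ∑ p, (starRingEnd ℂ) ((S *ᵥ x) p) * x p := by
      rw [PiLp.inner_apply]
      exact Finset.sum_congr rfl fun p _ => RCLike.inner_apply' _ _
    have hSmv : ∀ p, (S *ᵥ x) p = ∑ m ∈ M, ∑ k : Fin d × Fin d,
        (Qw d L lam lam1 w m k *ᵥ x) p := by
      intro p
      simp only [hS, Matrix.mulVec, dotProduct, Matrix.sum_apply, Finset.sum_mul]
      rw [Finset.sum_comm]
      exact Finset.sum_congr rfl fun m _ => Finset.sum_comm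
    have h1 : (inner ℂ (Matrix.toEuclideanCLM (𝕜 := ℂ) S x) x : ℂ)
        = ∑ m ∈ M, ∑ k : Fin d × Fin d, ∑ p,
            (starRingEnd ℂ) ((Qw d L lam lam1 w m k *ᵥ x) p) * x p := by
      rw [h0]
      have : ∀ p, (starRingEnd ℂ) ((S *ᵥ x) p) * x p
          = ∑ m ∈ M, ∑ k : Fin d × Fin d,
              (starRingEnd ℂ) ((Qw d L lam lam1 w m k *ᵥ x) p) * x p := by
        intro p
        rw [hSmv p, map_sum, Finset.sum_mul]
        exact Finset.sum_congr rfl fun m _ => by rw [map_sum, Finset.sum_mul]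
      rw [Finset.sum_congr rfl fun p _ => this p]
      rw [Finset.sum_comm]
      exact Finset.sum_congr rfl fun m _ => Finset.sum_comm
    rw [h1]
    rw [Complex.re_sum]
    refine Finset.sum_congr rfl fun m _ => ?_
    rw [Complex.re_sum]
    refine Finset.sum_congr rfl fun k _ => ?_
    rw [qf_Qw d L lam lam1 w m k x, Complex.re_sum]
    refine Finset.sum_congr rfl fun ℓ _ => ?_
    set c : ℂ := ∑ n, (starRingEnd ℂ) (avec d L lam lam1 w ℓ m k n) * x (ℓ, n) with hc
    have : ((lam ℓ : ℂ) ^ 2)⁻¹ * ((starRingEnd ℂ) c * c)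
        = ((((lam ℓ) ^ 2)⁻¹ * ‖c‖ ^ 2 : ℝ) : ℂ) := by
      rw [RCLike.conj_mul]
      norm_cast
      exact (Complex.ofReal_mul _ _).symm
    rw [this, Complex.ofReal_re]
  -- positivity of the form
  have hpos : ∀ x : EuclideanSpace ℂ (Fin L × (Fin d × Fin d)),
      0 ≤ (inner ℂ (Matrix.toEuclideanCLM (𝕜 := ℂ) S x) x : ℂ).re := by
    intro x
    rw [key x]
    refine Finset.sum_nonneg fun m _ => Finset.sum_nonneg fun k _ =>
      Finset.sum_nonneg fun ℓ _ => ?_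
    positivity
  -- the bound
  have hbound : ∀ x : EuclideanSpace ℂ (Fin L × (Fin d × Fin d)),
      (inner ℂ (Matrix.toEuclideanCLM (𝕜 := ℂ) S x) x : ℂ).re ≤ C * ‖x‖ ^ 2 := by
    intro x
    rw [key x]
    have hswap : ∑ m ∈ M, ∑ k : Fin d × Fin d, ∑ ℓ, ((lam ℓ) ^ 2)⁻¹ *
          ‖∑ n, (starRingEnd ℂ) (avec d L lam lam1 w ℓ m k n) * x (ℓ, n)‖ ^ 2
        = ∑ ℓ, ∑ m ∈ M, ∑ k : Fin d × Fin d, ((lam ℓ) ^ 2)⁻¹ *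
            ‖∑ n, (starRingEnd ℂ) (avec d L lam lam1 w ℓ m k n) * x (ℓ, n)‖ ^ 2 := by
      calc _ = ∑ m ∈ M, ∑ ℓ, ∑ k : Fin d × Fin d, ((lam ℓ) ^ 2)⁻¹ *
            ‖∑ n, (starRingEnd ℂ) (avec d L lam lam1 w ℓ m k n) * x (ℓ, n)‖ ^ 2 :=
          Finset.sum_congr rfl fun m _ => Finset.sum_comm
        _ = _ := Finset.sum_comm
    rw [hswap]
    have hnormx : ‖x‖ ^ 2 = ∑ ℓ, ∑ n : Fin d × Fin d, ‖x (ℓ, n)‖ ^ 2 := by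
      rw [EuclideanSpace.norm_eq, Real.sq_sqrt (by positivity)]
      exact Fintype.sum_prod_type _
    rw [hnormx, Finset.mul_sum]
    refine Finset.sum_le_sum fun ℓ _ => ?_
    -- per-ℓ bound
    have hterm : ∀ m ∈ M, ∑ k : Fin d × Fin d,
        ‖∑ n, (starRingEnd ℂ) (avec d L lam lam1 w ℓ m k n) * x (ℓ, n)‖ ^ 2
          ≤ specNorm (Fmat d L lam lam1 ℓ) ^ 2 *
            ∑ n : Fin d × Fin d, ‖extz d (w ℓ) ((n.1 : ℤ) - m.1, (n.2 : ℤ) - m.2)‖ ^ 2 *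
              ‖x (ℓ, n)‖ ^ 2 := by
      intro m _
      have := sum_sq_mulVec_le (Fmat d L lam lam1 ℓ)
        (fun n : Fin d × Fin d => extz d (w ℓ) ((n.1 : ℤ) - m.1, (n.2 : ℤ) - m.2) * x (ℓ, n))
      simp only [← c_eq d L lam lam1 w ℓ m _ x] at this
      refine this.trans (le_of_eq ?_)
      congr 1
      exact Finset.sum_congr rfl fun n _ => by rw [norm_mul, mul_pow]
    calc ∑ m ∈ M, ∑ k : Fin d × Fin d, ((lam ℓ) ^ 2)⁻¹ *
            ‖∑ n, (starRingEnd ℂ) (avec d L lam lam1 w ℓ m k n) * x (ℓ, n)‖ ^ 2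
        = ((lam ℓ) ^ 2)⁻¹ * ∑ m ∈ M, ∑ k : Fin d × Fin d,
            ‖∑ n, (starRingEnd ℂ) (avec d L lam lam1 w ℓ m k n) * x (ℓ, n)‖ ^ 2 := by
          simp only [Finset.mul_sum]
      _ ≤ ((lam ℓ) ^ 2)⁻¹ * ∑ m ∈ M, specNorm (Fmat d L lam lam1 ℓ) ^ 2 *
            ∑ n : Fin d × Fin d, ‖extz d (w ℓ) ((n.1 : ℤ) - m.1, (n.2 : ℤ) - m.2)‖ ^ 2 *
              ‖x (ℓ, n)‖ ^ 2 := by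
          have h2 : (0:ℝ) ≤ ((lam ℓ) ^ 2)⁻¹ := by positivity
          exact mul_le_mul_of_nonneg_left (Finset.sum_le_sum hterm) h2
      _ = ((lam ℓ) ^ 2)⁻¹ * specNorm (Fmat d L lam lam1 ℓ) ^ 2 *
            ∑ n : Fin d × Fin d,
              (∑ m ∈ M, ‖extz d (w ℓ) ((n.1 : ℤ) - m.1, (n.2 : ℤ) - m.2)‖ ^ 2) *
                ‖x (ℓ, n)‖ ^ 2 := by
          rw [← Finset.mul_sum, mul_assoc]
          congr 2
          rw [Finset.sum_comm]
          exact Finset.sum_congr rfl fun n _ => by rw [Finset.sum_mul]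
      _ ≤ ((lam ℓ) ^ 2)⁻¹ * specNorm (Fmat d L lam lam1 ℓ) ^ 2 *
            ∑ n : Fin d × Fin d, W ℓ * ‖x (ℓ, n)‖ ^ 2 := by
          have h2 : (0:ℝ) ≤ ((lam ℓ) ^ 2)⁻¹ * specNorm (Fmat d L lam lam1 ℓ) ^ 2 := by
            positivity
          refine mul_le_mul_of_nonneg_left (Finset.sum_le_sum fun n _ => ?_) h2
          exact mul_le_mul_of_nonneg_right (hWle ℓ n) (by positivity)
      _ = B ℓ * ∑ n : Fin d × Fin d, ‖x (ℓ, n)‖ ^ 2 := by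
          rw [← Finset.mul_sum, hBdef]
          ring
      _ ≤ C * ∑ n : Fin d × Fin d, ‖x (ℓ, n)‖ ^ 2 := by
          exact mul_le_mul_of_nonneg_right (hBC ℓ) (by positivity)
  exact specNorm_le_of_quadform S hSH C hC0 hpos hbound
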